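/- arXiv:2405.05656 — 2 statements merged into one kernel-verified Lean document; each statement's English description precedes it below -/
import Mathlib

section
/- Let Θ be a measurable space, 𝒴 a finite nonempty set, and f : 𝒴 × Θ → (0,∞) measurable in θ with ∑_{y ∈ 𝒴} f(y,θ) = 1 for every θ. Let h : 𝒴 → ℝ be bounded and define η(θ) = ∑_{y ∈ 𝒴} h(y) f(y,θ). Fix observations y₁,…,yₙ ∈ 𝒴 such that every element of 𝒴 occurs among y₁,…,yₙ. If Ĝ₁ and Ĝ₂ both maximize the likelihood G ↦ ∏_{i=1}^n f_G(yᵢ) over all probability measures G on Θ, then ∫ η(θ) dĜ₁(θ) = ∫ η(θ) dĜ₂(θ). -/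
/-!
The map `G ↦ (f_G(v))_v` is affine in `G`, and since every `v ∈ 𝒴` is observed, the
likelihood `∏ᵢ f_G(yᵢ)` is a strictly log-concave function of this vector. If two maximizers
`Ĝ₁, Ĝ₂` had different vectors, their midpoint `(Ĝ₁ + Ĝ₂)/2` would have strictly larger
likelihood by the strict AM-GM inequality `√(ab) < (a + b)/2`. So all GMLEs share the mixture
density `f_Ĝ`, and `E_Ĝ η = ∑ᵥ h(v) f_Ĝ(v)` is a function of it.
-/

open MeasureTheory ENNReal NNReal

namespace Finset

variable {ι : Type*} {s : Finset ι} {a b : ι → ℝ}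

lemma prod_mul_prod_lt_prod_midpoint_sq (ha : ∀ i ∈ s, 0 < a i) (hb : ∀ i ∈ s, 0 < b i)
    (hne : ∃ i ∈ s, a i ≠ b i) :
    (∏ i ∈ s, a i) * ∏ i ∈ s, b i < (∏ i ∈ s, (a i + b i) / 2) ^ 2 := by
  rw [← prod_mul_distrib, ← prod_pow]
  obtain ⟨j, hj, hab⟩ := hne
  refine prod_lt_prod (fun i hi => mul_pos (ha i hi) (hb i hi))
    (fun i _ => by nlinarith [sq_nonneg (a i - b i)]) ⟨j, hj, ?_⟩
  nlinarith [mul_self_pos.2 (sub_ne_zero.2 hab)]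

lemma eqOn_of_prod_midpoint_le (ha : ∀ i ∈ s, 0 < a i) (hb : ∀ i ∈ s, 0 < b i)
    (hmid_a : ∏ i ∈ s, (a i + b i) / 2 ≤ ∏ i ∈ s, a i)
    (hmid_b : ∏ i ∈ s, (a i + b i) / 2 ≤ ∏ i ∈ s, b i) : Set.EqOn a b s := by
  by_contra hne
  simp only [Set.EqOn, not_forall] at hne
  obtain ⟨i, hi, hab⟩ := hne
  have hmid_nonneg : 0 ≤ ∏ i ∈ s, (a i + b i) / 2 :=
    prod_nonneg fun i hi => by linarith [ha i hi, hb i hi]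
  have := prod_mul_prod_lt_prod_midpoint_sq ha hb ⟨i, hi, hab⟩
  nlinarith [mul_le_mul hmid_a hmid_b hmid_nonneg (prod_nonneg fun i hi => (ha i hi).le)]

end Finset

section HalfMixture

variable {Θ : Type*} [MeasurableSpace Θ] {μ ν : Measure Θ}

instance isProbabilityMeasure_half_smul_add_half_smul [IsProbabilityMeasure μ]
    [IsProbabilityMeasure ν] : IsProbabilityMeasure ((2⁻¹ : ℝ≥0∞) • μ + (2⁻¹ : ℝ≥0∞) • ν) :=
  ⟨by simp [ENNReal.inv_two_add_inv_two]⟩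

lemma integral_half_smul_add_half_smul {g : Θ → ℝ} (hμ : Integrable g μ) (hν : Integrable g ν) :
    ∫ θ, g θ ∂((2⁻¹ : ℝ≥0∞) • μ + (2⁻¹ : ℝ≥0∞) • ν) = (∫ θ, g θ ∂μ + ∫ θ, g θ ∂ν) / 2 := by
  rw [integral_add_measure (hμ.smul_measure (by simp)) (hν.smul_measure (by simp)),
    integral_smul_measure, integral_smul_measure]
  simp only [toReal_inv, toReal_ofNat, smul_eq_mul]
  ring

end HalfMixture

section Mixture

variable {Θ 𝒴 : Type*} [MeasurableSpace Θ] [Fintype 𝒴]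

noncomputable def mixtureDensity (f : 𝒴 → Θ → ℝ≥0) (G : Measure Θ) (v : 𝒴) : ℝ :=
  ∫ θ, (f v θ : ℝ) ∂G

noncomputable def likelihood {n : ℕ} (f : 𝒴 → Θ → ℝ≥0) (y : Fin n → 𝒴) (G : Measure Θ) :
    ℝ≥0∞ :=
  ∏ i, ∫⁻ θ, (f (y i) θ : ℝ≥0∞) ∂G

def IsGMLE {n : ℕ} (f : 𝒴 → Θ → ℝ≥0) (y : Fin n → 𝒴) (G : Measure Θ) : Prop :=
  ∀ G' : Measure Θ, IsProbabilityMeasure G' → likelihood f y G' ≤ likelihood f y G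

variable {f : 𝒴 → Θ → ℝ≥0} (hfmeas : ∀ v, Measurable fun θ => f v θ)
  (hf1 : ∀ θ, ∑ v, f v θ = 1)

include hfmeas hf1 in
lemma integrable_coe_of_sum_eq_one (G : Measure Θ) [IsFiniteMeasure G] (v : 𝒴) :
    Integrable (fun θ => (f v θ : ℝ)) G := by
  refine (integrable_const (1 : ℝ)).mono' (hfmeas v).coe_nnreal_real.aestronglyMeasurable
    (Filter.Eventually.of_forall fun θ => ?_)
  rw [Real.norm_of_nonneg (f v θ).coe_nonneg, ← NNReal.coe_one, NNReal.coe_le_coe, ← hf1 θ]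
  exact Finset.single_le_sum (f := fun w => f w θ) (fun _ _ => zero_le) (Finset.mem_univ v)

include hfmeas hf1 in
lemma lintegral_coe_eq_ofReal_mixtureDensity (G : Measure Θ) [IsFiniteMeasure G] (v : 𝒴) :
    ∫⁻ θ, (f v θ : ℝ≥0∞) ∂G = ENNReal.ofReal (mixtureDensity f G v) :=
  lintegral_coe_eq_integral _ (integrable_coe_of_sum_eq_one hfmeas hf1 G v)

include hfmeas hf1 in
lemma mixtureDensity_pos (hfpos : ∀ v θ, 0 < f v θ) (G : Measure Θ) [IsFiniteMeasure G]
    [NeZero G] (v : 𝒴) : 0 < mixtureDensity f G v := by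
  rw [mixtureDensity, integral_pos_iff_support_of_nonneg (fun θ => (f v θ).coe_nonneg)
    (integrable_coe_of_sum_eq_one hfmeas hf1 G v)]
  have hsupp : Function.support (fun θ => (f v θ : ℝ)) = Set.univ :=
    Function.support_eq_univ fun θ => (NNReal.coe_pos.2 (hfpos v θ)).ne'
  simpa [hsupp] using NeZero.ne G

include hfmeas hf1 in
lemma mixtureDensity_half_smul_add_half_smul (G₁ G₂ : Measure Θ) [IsFiniteMeasure G₁]
    [IsFiniteMeasure G₂] (v : 𝒴) :
    mixtureDensity f ((2⁻¹ : ℝ≥0∞) • G₁ + (2⁻¹ : ℝ≥0∞) • G₂) v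
      = (mixtureDensity f G₁ v + mixtureDensity f G₂ v) / 2 :=
  integral_half_smul_add_half_smul (integrable_coe_of_sum_eq_one hfmeas hf1 G₁ v)
    (integrable_coe_of_sum_eq_one hfmeas hf1 G₂ v)

include hfmeas hf1 in
lemma likelihood_eq_ofReal_prod {n : ℕ} (y : Fin n → 𝒴) (G : Measure Θ) [IsFiniteMeasure G] :
    likelihood f y G = ENNReal.ofReal (∏ i, mixtureDensity f G (y i)) := by
  have hnonneg (i : Fin n) : 0 ≤ mixtureDensity f G (y i) :=
    integral_nonneg fun θ => (f (y i) θ).coe_nonneg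
  rw [likelihood, ENNReal.ofReal_prod_of_nonneg fun i _ => hnonneg i]
  exact Finset.prod_congr rfl fun i _ => lintegral_coe_eq_ofReal_mixtureDensity hfmeas hf1 G _

include hfmeas hf1 in
lemma integral_sum_mul_eq_sum_mul_mixtureDensity (h : 𝒴 → ℝ) (G : Measure Θ)
    [IsFiniteMeasure G] :
    ∫ θ, (∑ v, h v * (f v θ : ℝ)) ∂G = ∑ v, h v * mixtureDensity f G v := by
  rw [integral_finsetSum _ fun v _ => (integrable_coe_of_sum_eq_one hfmeas hf1 G v).const_mul _]
  simp only [integral_const_mul, mixtureDensity]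

include hfmeas hf1 in
lemma mixtureDensity_eq_of_isGMLE (hfpos : ∀ v θ, 0 < f v θ) {n : ℕ} {y : Fin n → 𝒴}
    {G₁ G₂ : Measure Θ} [IsProbabilityMeasure G₁] [IsProbabilityMeasure G₂]
    (hG₁ : IsGMLE f y G₁) (hG₂ : IsGMLE f y G₂) (i : Fin n) :
    mixtureDensity f G₁ (y i) = mixtureDensity f G₂ (y i) := by
  have hpos (G : Measure Θ) [IsProbabilityMeasure G] (v : 𝒴) : 0 < mixtureDensity f G v :=
    mixtureDensity_pos hfmeas hf1 hfpos G v
  have hmid_le (G : Measure Θ) [IsProbabilityMeasure G] (hG : IsGMLE f y G) :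
      ∏ i, (mixtureDensity f G₁ (y i) + mixtureDensity f G₂ (y i)) / 2
        ≤ ∏ i, mixtureDensity f G (y i) := by
    have hmid := hG ((2⁻¹ : ℝ≥0∞) • G₁ + (2⁻¹ : ℝ≥0∞) • G₂) inferInstance
    rw [likelihood_eq_ofReal_prod hfmeas hf1, likelihood_eq_ofReal_prod hfmeas hf1,
      ENNReal.ofReal_le_ofReal_iff (Finset.prod_nonneg fun i _ => (hpos G (y i)).le)] at hmid
    simpa only [mixtureDensity_half_smul_add_half_smul hfmeas hf1] using hmid
  exact Finset.eqOn_of_prod_midpoint_le (fun i _ => hpos G₁ (y i)) (fun i _ => hpos G₂ (y i))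
    (hmid_le G₁ hG₁) (hmid_le G₂ hG₂) (Finset.mem_univ i)

end Mixture

theorem gmle_mixture_mean_unique_of_finite_support_general
    {Θ 𝒴 : Type*} [MeasurableSpace Θ] [Fintype 𝒴]
    (f : 𝒴 → Θ → ℝ≥0) (hfpos : ∀ y θ, 0 < f y θ)
    (hfmeas : ∀ y, Measurable fun θ => f y θ)
    (hf1 : ∀ θ, ∑ y : 𝒴, f y θ = 1)
    (h : 𝒴 → ℝ)
    (n : ℕ) (y : Fin n → 𝒴) (hy : Function.Surjective y)
    (G₁ G₂ : Measure Θ) [IsProbabilityMeasure G₁] [IsProbabilityMeasure G₂]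
    (hG₁ : ∀ G : Measure Θ, IsProbabilityMeasure G →
      ∏ i : Fin n, ∫⁻ θ, (f (y i) θ : ℝ≥0∞) ∂G ≤
        ∏ i : Fin n, ∫⁻ θ, (f (y i) θ : ℝ≥0∞) ∂G₁)
    (hG₂ : ∀ G : Measure Θ, IsProbabilityMeasure G →
      ∏ i : Fin n, ∫⁻ θ, (f (y i) θ : ℝ≥0∞) ∂G ≤
        ∏ i : Fin n, ∫⁻ θ, (f (y i) θ : ℝ≥0∞) ∂G₂) :
    ∫ θ, (∑ v : 𝒴, h v * (f v θ : ℝ)) ∂G₁ = ∫ θ, (∑ v : 𝒴, h v * (f v θ : ℝ)) ∂G₂ := by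
  have hdensity : mixtureDensity f G₁ = mixtureDensity f G₂ := funext fun v => by
    obtain ⟨i, rfl⟩ := hy v
    exact mixtureDensity_eq_of_isGMLE hfmeas hf1 hfpos hG₁ hG₂ i
  rw [integral_sum_mul_eq_sum_mul_mixtureDensity hfmeas hf1,
    integral_sum_mul_eq_sum_mul_mixtureDensity hfmeas hf1, hdensity]

/-- Finite-sample content of the paper's Theorem 1: in the finite-support
case with every outcome realized among the observations, the estimated
mixture mean `E_{Ĝ} η(θ)`, for `η θ = ∑ y, h y * f y θ = E_θ h(Y)`, is the
same for every GMLE `Ĝ`, despite non-identifiability of `G`. -/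
theorem gmle_mixture_mean_unique_of_finite_support
    {Θ 𝒴 : Type*} [MeasurableSpace Θ] [Fintype 𝒴] [Nonempty 𝒴]
    (f : 𝒴 → Θ → ℝ≥0) (hfpos : ∀ y θ, 0 < f y θ)
    (hfmeas : ∀ y, Measurable fun θ => f y θ)
    (hf1 : ∀ θ, ∑ y : 𝒴, f y θ = 1)
    (h : 𝒴 → ℝ)
    (n : ℕ) (y : Fin n → 𝒴) (hy : Function.Surjective y)
    (G₁ G₂ : Measure Θ) [IsProbabilityMeasure G₁] [IsProbabilityMeasure G₂]
    (hG₁ : ∀ G : Measure Θ, IsProbabilityMeasure G →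
      ∏ i : Fin n, ∫⁻ θ, (f (y i) θ : ℝ≥0∞) ∂G ≤
        ∏ i : Fin n, ∫⁻ θ, (f (y i) θ : ℝ≥0∞) ∂G₁)
    (hG₂ : ∀ G : Measure Θ, IsProbabilityMeasure G →
      ∏ i : Fin n, ∫⁻ θ, (f (y i) θ : ℝ≥0∞) ∂G ≤
        ∏ i : Fin n, ∫⁻ θ, (f (y i) θ : ℝ≥0∞) ∂G₂) :
    ∫ θ, (∑ v : 𝒴, h v * (f v θ : ℝ)) ∂G₁ = ∫ θ, (∑ v : 𝒴, h v * (f v θ : ℝ)) ∂G₂ :=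
  gmle_mixture_mean_unique_of_finite_support_general f hfpos hfmeas hf1 h n y hy G₁ G₂ hG₁ hG₂
end

section
/- Let Θ be a metric space equipped with its Borel σ-algebra, 𝒴 a finite nonempty set, and f : 𝒴 × Θ → (0,∞) such that for each y ∈ 𝒴 the map θ ↦ f(y,θ) is continuous and bounded, and ∑_{y ∈ 𝒴} f(y,θ) = 1 for every θ. Let h : 𝒴 → ℝ be bounded and define η(θ) = ∑_{y ∈ 𝒴} h(y) f(y,θ). Let y₁, y₂, … be a sequence in 𝒴 such that there exists N with every element of 𝒴 occurring among y₁,…,y_N. Let G be a probability measure on Θ, and suppose there exists a sequence Ĝ₀ⁿ of probability measures, each Ĝ₀ⁿ maximizing G' ↦ ∏_{i=1}^n f_{G'}(yᵢ) over all probability measures on Θ, such that Ĝ₀ⁿ converges weakly to G. Then for every sequence Ĝⁿ of probability measures with each Ĝⁿ maximizing G' ↦ ∏_{i=1}^n f_{G'}(yᵢ), one has ∫ η dĜⁿ → ∫ η dG as n → ∞. -/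
/-! The likelihood of a mixing distribution `G'` depends on `G'` only through the mixture
probabilities `f_{G'}(v) = ∫ f(v, ·) dG'`, which are affine in `G'`. By the AM-GM inequality
the likelihood of the midpoint of two maximizers is at least the geometric mean of their
likelihoods, strictly so unless their mixture probabilities agree at every observed value.
Hence all GMLEs share the same mixture probabilities as soon as every `v` has been observed,
and `∫ η dG' = ∑ v, h v * f_{G'}(v)` is the same for all of them; weak convergence of one
sequence of GMLEs then gives the limit. -/

open MeasureTheory ENNReal NNReal Filter
open scoped BoundedContinuousFunction

theorem Finset.eqOn_of_prod_add_div_two_le_prod {ι : Type*} {s : Finset ι} {a b : ι → ℝ}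
    (ha : ∀ i ∈ s, 0 < a i) (hb : ∀ i ∈ s, 0 < b i)
    (hmid : ∏ i ∈ s, (a i + b i) / 2 ≤ ∏ i ∈ s, a i) (hab : ∏ i ∈ s, a i ≤ ∏ i ∈ s, b i) :
    Set.EqOn a b s := by
  by_contra hne
  obtain ⟨j, hj, hj_ne⟩ : ∃ j ∈ s, a j ≠ b j := by simpa [Set.EqOn] using hne
  have hlt : ∏ i ∈ s, a i * b i < ∏ i ∈ s, ((a i + b i) / 2) ^ 2 := by
    refine Finset.prod_lt_prod (fun i hi => mul_pos (ha i hi) (hb i hi))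
      (fun i _ => by nlinarith [sq_nonneg (a i - b i)]) ⟨j, hj, ?_⟩
    nlinarith [sq_pos_of_ne_zero (sub_ne_zero.2 hj_ne)]
  have hmid_nonneg : 0 ≤ ∏ i ∈ s, (a i + b i) / 2 :=
    Finset.prod_nonneg fun i hi => by linarith [ha i hi, hb i hi]
  have ha_nonneg : 0 ≤ ∏ i ∈ s, a i := Finset.prod_nonneg fun i hi => (ha i hi).le
  -- whereas `∏ a * ∏ b ≥ (∏ a) ^ 2 ≥ (∏ (a + b) / 2) ^ 2`
  rw [Finset.prod_mul_distrib, Finset.prod_pow] at hlt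
  nlinarith [mul_le_mul hmid hmid hmid_nonneg ha_nonneg]

theorem ENNReal.eqOn_of_prod_add_div_two_le_prod {ι : Type*} {s : Finset ι} {a b : ι → ℝ≥0∞}
    (ha₀ : ∀ i ∈ s, a i ≠ 0) (ha : ∀ i ∈ s, a i ≠ ∞)
    (hb₀ : ∀ i ∈ s, b i ≠ 0) (hb : ∀ i ∈ s, b i ≠ ∞)
    (hmid : ∏ i ∈ s, (a i + b i) / 2 ≤ ∏ i ∈ s, a i) (hab : ∏ i ∈ s, a i ≤ ∏ i ∈ s, b i) :
    Set.EqOn a b s := by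
  have hreal := Finset.eqOn_of_prod_add_div_two_le_prod (s := s) (a := fun i => (a i).toReal)
    (b := fun i => (b i).toReal) (fun i hi => ENNReal.toReal_pos (ha₀ i hi) (ha i hi))
    (fun i hi => ENNReal.toReal_pos (hb₀ i hi) (hb i hi)) ?_ ?_
  · exact fun i hi => (ENNReal.toReal_eq_toReal_iff' (ha i hi) (hb i hi)).1 (hreal hi)
  · have hmid_toReal : ∀ i ∈ s, ((a i + b i) / 2).toReal = ((a i).toReal + (b i).toReal) / 2 :=
      fun i hi => by rw [ENNReal.toReal_div, ENNReal.toReal_add (ha i hi) (hb i hi)]; rfl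
    rw [← Finset.prod_congr rfl hmid_toReal, ← ENNReal.toReal_prod, ← ENNReal.toReal_prod]
    exact ENNReal.toReal_mono (ENNReal.prod_ne_top ha) hmid
  · simpa [← ENNReal.toReal_prod] using ENNReal.toReal_mono (ENNReal.prod_ne_top hb) hab

section Mixture

variable {Θ ι : Type*} [MeasurableSpace Θ]

instance isProbabilityMeasure_half_add_half (μ ν : Measure Θ) [IsProbabilityMeasure μ]
    [IsProbabilityMeasure ν] : IsProbabilityMeasure ((2 : ℝ≥0∞)⁻¹ • μ + (2 : ℝ≥0∞)⁻¹ • ν) :=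
  ⟨by simp [ENNReal.inv_two_add_inv_two]⟩

theorem lintegral_half_add_half (μ ν : Measure Θ) (g : Θ → ℝ≥0∞) :
    ∫⁻ θ, g θ ∂((2 : ℝ≥0∞)⁻¹ • μ + (2 : ℝ≥0∞)⁻¹ • ν) = (∫⁻ θ, g θ ∂μ + ∫⁻ θ, g θ ∂ν) / 2 := by
  rw [lintegral_add_measure, lintegral_smul_measure, lintegral_smul_measure,
    ENNReal.div_eq_inv_mul, mul_add]
  rfl

theorem lintegral_eqOn_of_isMaxOn_prod_lintegral {s : Finset ι} {g : ι → Θ → ℝ≥0∞}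
    {μ ν : Measure Θ} [IsProbabilityMeasure μ] [IsProbabilityMeasure ν]
    (hμ₀ : ∀ i ∈ s, ∫⁻ θ, g i θ ∂μ ≠ 0) (hμ : ∀ i ∈ s, ∫⁻ θ, g i θ ∂μ ≠ ∞)
    (hν₀ : ∀ i ∈ s, ∫⁻ θ, g i θ ∂ν ≠ 0) (hν : ∀ i ∈ s, ∫⁻ θ, g i θ ∂ν ≠ ∞)
    (hμ_max : IsMaxOn (fun G : Measure Θ => ∏ i ∈ s, ∫⁻ θ, g i θ ∂G)
      {G | IsProbabilityMeasure G} μ)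
    (hμν : ∏ i ∈ s, ∫⁻ θ, g i θ ∂μ ≤ ∏ i ∈ s, ∫⁻ θ, g i θ ∂ν) :
    Set.EqOn (fun i => ∫⁻ θ, g i θ ∂μ) (fun i => ∫⁻ θ, g i θ ∂ν) s := by
  refine ENNReal.eqOn_of_prod_add_div_two_le_prod hμ₀ hμ hν₀ hν ?_ hμν
  simpa only [lintegral_half_add_half] using
    isMaxOn_iff.1 hμ_max _ (isProbabilityMeasure_half_add_half μ ν)

theorem lintegral_coe_ne_zero_of_pos {μ : Measure Θ} [NeZero μ] {f : Θ → ℝ≥0}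
    (hf : Measurable f) (hpos : ∀ θ, 0 < f θ) : ∫⁻ θ, (f θ : ℝ≥0∞) ∂μ ≠ 0 := by
  refine ((lintegral_pos_iff_support (by fun_prop)).2 ?_).ne'
  have hsupport : Function.support (fun θ => (f θ : ℝ≥0∞)) = Set.univ :=
    Set.eq_univ_of_forall fun θ => by simpa using (hpos θ).ne'
  simpa [hsupport] using Measure.measure_univ_pos.2 (NeZero.ne μ)

theorem integral_sum_mul_coe_eq_sum_mul_toReal_lintegral {𝒴 : Type*} [Fintype 𝒴]
    {μ : Measure Θ} {f : 𝒴 → Θ → ℝ≥0} (hf : ∀ v, Measurable (f v))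
    (hμ : ∀ v, ∫⁻ θ, (f v θ : ℝ≥0∞) ∂μ ≠ ∞) (c : 𝒴 → ℝ) :
    ∫ θ, ∑ v, c v * (f v θ : ℝ) ∂μ = ∑ v, c v * (∫⁻ θ, (f v θ : ℝ≥0∞) ∂μ).toReal := by
  have hint : ∀ v, Integrable (fun θ => (f v θ : ℝ)) μ := fun v => by
    simpa using integrable_toReal_of_lintegral_ne_top (by fun_prop) (hμ v)
  rw [integral_finsetSum _ fun v _ => (hint v).const_mul (c v)]
  refine Finset.sum_congr rfl fun v _ => ?_
  rw [integral_const_mul, ← integral_toReal (by fun_prop) (.of_forall fun _ => coe_lt_top)]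
  rfl

end Mixture

theorem BoundedContinuousFunction.exists_coe_eq_sum_mul {Θ 𝒴 : Type*} [TopologicalSpace Θ]
    [Fintype 𝒴] {f : 𝒴 → Θ → ℝ≥0} (hf : ∀ v, Continuous (f v)) (hf_le : ∀ v θ, f v θ ≤ 1)
    (c : 𝒴 → ℝ) : ∃ g : Θ →ᵇ ℝ, ⇑g = fun θ => ∑ v, c v * (f v θ : ℝ) := by
  refine ⟨∑ v, c v • ofNormedAddCommGroup (fun θ => (f v θ : ℝ)) (by fun_prop) 1
    fun θ => ?_, by ext; simp⟩
  simpa using hf_le v θ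

theorem gmle_mixture_mean_consistent_of_some_gmle_weakly_convergent_general
    {Θ 𝒴 : Type*} [MetricSpace Θ] [MeasurableSpace Θ] [BorelSpace Θ]
    [Fintype 𝒴]
    (f : 𝒴 → Θ → ℝ≥0) (hfpos : ∀ y θ, 0 < f y θ)
    (hfcont : ∀ y, Continuous fun θ => f y θ)
    (hf1 : ∀ θ, ∑ y : 𝒴, f y θ = 1)
    (h : 𝒴 → ℝ)
    (y : ℕ → 𝒴) (hy : ∃ N : ℕ, ∀ v : 𝒴, ∃ i < N, y i = v)
    (G : Measure Θ)
    (G₀ : ℕ → Measure Θ) (hG₀prob : ∀ n, IsProbabilityMeasure (G₀ n))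
    (hG₀gmle : ∀ n, ∀ G' : Measure Θ, IsProbabilityMeasure G' →
      ∏ i ∈ Finset.range n, ∫⁻ θ, (f (y i) θ : ℝ≥0∞) ∂G' ≤
        ∏ i ∈ Finset.range n, ∫⁻ θ, (f (y i) θ : ℝ≥0∞) ∂(G₀ n))
    (hG₀weak : ∀ g : BoundedContinuousFunction Θ ℝ,
      Tendsto (fun n : ℕ => ∫ θ, g θ ∂(G₀ n)) atTop (nhds (∫ θ, g θ ∂G))) :
    ∀ Ghat : ℕ → Measure Θ, (∀ n, IsProbabilityMeasure (Ghat n)) →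
      (∀ n, ∀ G' : Measure Θ, IsProbabilityMeasure G' →
        ∏ i ∈ Finset.range n, ∫⁻ θ, (f (y i) θ : ℝ≥0∞) ∂G' ≤
          ∏ i ∈ Finset.range n, ∫⁻ θ, (f (y i) θ : ℝ≥0∞) ∂(Ghat n)) →
      Tendsto (fun n : ℕ => ∫ θ, (∑ v : 𝒴, h v * (f v θ : ℝ)) ∂(Ghat n))
        atTop (nhds (∫ θ, (∑ v : 𝒴, h v * (f v θ : ℝ)) ∂G)) := by
  intro Ghat hGhat_prob hGhat_gmle
  obtain ⟨N, hN⟩ := hy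
  have hf_meas : ∀ v, Measurable (f v) := fun v => (hfcont v).measurable
  have hf_le_one : ∀ v θ, f v θ ≤ 1 := fun v θ =>
    hf1 θ ▸ Finset.single_le_sum (f := fun w => f w θ) (fun w _ => zero_le) (Finset.mem_univ v)
  have hne_zero (μ : Measure Θ) (_ : IsProbabilityMeasure μ) (v : 𝒴) :
      ∫⁻ θ, (f v θ : ℝ≥0∞) ∂μ ≠ 0 :=
    lintegral_coe_ne_zero_of_pos (hf_meas v) (hfpos v)
  have hne_top (μ : Measure Θ) (_ : IsProbabilityMeasure μ) (v : 𝒴) :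
      ∫⁻ θ, (f v θ : ℝ≥0∞) ∂μ ≠ ∞ :=
    (IsFiniteMeasure.lintegral_lt_top_of_bounded_to_ennreal μ
      ⟨1, fun θ => coe_le_coe.2 (hf_le_one v θ)⟩).ne
  have hGMLEs_agree : ∀ n ≥ N, ∀ v,
      ∫⁻ θ, (f v θ : ℝ≥0∞) ∂(Ghat n) = ∫⁻ θ, (f v θ : ℝ≥0∞) ∂(G₀ n) := by
    intro n hn v
    obtain ⟨i, hiN, rfl⟩ := hN v
    have := hGhat_prob n
    have := hG₀prob n
    exact lintegral_eqOn_of_isMaxOn_prod_lintegral (g := fun i θ => f (y i) θ)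
      (fun i _ => hne_zero _ (hGhat_prob n) _) (fun i _ => hne_top _ (hGhat_prob n) _)
      (fun i _ => hne_zero _ (hG₀prob n) _) (fun i _ => hne_top _ (hG₀prob n) _)
      (isMaxOn_iff.2 (hGhat_gmle n)) (hG₀gmle n _ (hGhat_prob n))
      (Finset.mem_range.2 (hiN.trans_le hn))
  obtain ⟨η, hη⟩ := BoundedContinuousFunction.exists_coe_eq_sum_mul hfcont hf_le_one h
  refine (hη ▸ hG₀weak η).congr' ((eventually_ge_atTop N).mono fun n hn => ?_)
  simp only [integral_sum_mul_coe_eq_sum_mul_toReal_lintegral hf_meas (hne_top _ (hG₀prob n)),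
    integral_sum_mul_coe_eq_sum_mul_toReal_lintegral hf_meas (hne_top _ (hGhat_prob n)),
    hGMLEs_agree n hn]

/-- The paper's Theorem 3 (finite-support setting): if some sequence `G₀ⁿ` of
GMLEs converges weakly to the true mixing distribution `G` (the paper's
Assumption 3), then every sequence `Gⁿ` of GMLEs yields a consistent estimate
of the mixture mean: `∫ η dGⁿ → ∫ η dG`, where `η θ = ∑ y, h y * f y θ`,
without any identifiability assumption. -/
theorem gmle_mixture_mean_consistent_of_some_gmle_weakly_convergent
    {Θ 𝒴 : Type*} [MetricSpace Θ] [MeasurableSpace Θ] [BorelSpace Θ]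
    [Fintype 𝒴] [Nonempty 𝒴]
    (f : 𝒴 → Θ → ℝ≥0) (hfpos : ∀ y θ, 0 < f y θ)
    (hfcont : ∀ y, Continuous fun θ => f y θ)
    (hf1 : ∀ θ, ∑ y : 𝒴, f y θ = 1)
    (h : 𝒴 → ℝ)
    (y : ℕ → 𝒴) (hy : ∃ N : ℕ, ∀ v : 𝒴, ∃ i < N, y i = v)
    (G : Measure Θ) [IsProbabilityMeasure G]
    (G₀ : ℕ → Measure Θ) (hG₀prob : ∀ n, IsProbabilityMeasure (G₀ n))
    (hG₀gmle : ∀ n, ∀ G' : Measure Θ, IsProbabilityMeasure G' →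
      ∏ i ∈ Finset.range n, ∫⁻ θ, (f (y i) θ : ℝ≥0∞) ∂G' ≤
        ∏ i ∈ Finset.range n, ∫⁻ θ, (f (y i) θ : ℝ≥0∞) ∂(G₀ n))
    (hG₀weak : ∀ g : BoundedContinuousFunction Θ ℝ,
      Tendsto (fun n : ℕ => ∫ θ, g θ ∂(G₀ n)) atTop (nhds (∫ θ, g θ ∂G))) :
    ∀ Ghat : ℕ → Measure Θ, (∀ n, IsProbabilityMeasure (Ghat n)) →
      (∀ n, ∀ G' : Measure Θ, IsProbabilityMeasure G' →
        ∏ i ∈ Finset.range n, ∫⁻ θ, (f (y i) θ : ℝ≥0∞) ∂G' ≤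
          ∏ i ∈ Finset.range n, ∫⁻ θ, (f (y i) θ : ℝ≥0∞) ∂(Ghat n)) →
      Tendsto (fun n : ℕ => ∫ θ, (∑ v : 𝒴, h v * (f v θ : ℝ)) ∂(Ghat n))
        atTop (nhds (∫ θ, (∑ v : 𝒴, h v * (f v θ : ℝ)) ∂G)) :=
  gmle_mixture_mean_consistent_of_some_gmle_weakly_convergent_general f hfpos hfcont hf1 h y hy G G₀
    hG₀prob hG₀gmle hG₀weak
end
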